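/- arXiv:2512.00661 — 3 statements merged into one kernel-verified Lean document; each statement's English description precedes it below -/
import Mathlib

section
/- (Perpendicular bisector theorem / Conley) Let q_1,...,q_n be a planar central configuration and p, q two of the bodies. Partition the plane into the four closed quadrants I, II, III, IV determined by the line through p, q and the perpendicular bisector of segment pq (numbered counterclockwise starting from upper right). If no body lies in the interior of I ∪ III, then no body lies in the interior of II ∪ IV, and conversely. -/
/-!
Apply the functional `wedge (q b - q a)` to the central configuration equations at `a` and
`b`: the left-hand sides agree and, after subtracting, one gets the Krediet–Laura–Andoyer
identity `∑ⱼ mⱼ (r_{aj}⁻³ - r_{bj}⁻³) Δⱼ = 0`, where `Δⱼ` is the signed area of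
`(q a, q b, q j)`. As `r ↦ r⁻³` is decreasing, every term is a positive multiple of
`-Δⱼ (r_{ja}² - r_{jb}²)`; a vanishing sum without terms of one sign has no terms of the other.
-/

open Finset

/-- Planar wedge product of two vectors of the Euclidean plane. -/
noncomputable def wedge (p r : EuclideanSpace ℝ (Fin 2)) : ℝ := p 0 * r 1 - p 1 * r 0

noncomputable def wedgeₗ (v : EuclideanSpace ℝ (Fin 2)) : EuclideanSpace ℝ (Fin 2) →ₗ[ℝ] ℝ where
  toFun := wedge v
  map_add' x y := by simp only [wedge, PiLp.add_apply]; ring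
  map_smul' c x := by simp only [wedge, PiLp.smul_apply, smul_eq_mul, RingHom.id_apply]; ring

@[simp]
lemma wedgeₗ_apply (v x : EuclideanSpace ℝ (Fin 2)) : wedgeₗ v x = wedge v x := rfl

@[simp]
lemma wedge_self (v : EuclideanSpace ℝ (Fin 2)) : wedge v v = 0 := by
  simp only [wedge, mul_comm, sub_self]

lemma wedge_sub_sub_sub_comm (x y z : EuclideanSpace ℝ (Fin 2)) :
    wedge (x - y) (z - y) = -wedge (y - x) (z - x) := by
  simp only [wedge, PiLp.sub_apply]; ring

lemma exists_pos_div_pow_three_sub_eq_mul_sq_sub {m x y : ℝ} (hm : 0 < m) (hx : 0 < x)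
    (hy : 0 < y) : ∃ κ > 0, m / y ^ 3 - m / x ^ 3 = κ * (x ^ 2 - y ^ 2) :=
  ⟨m * (x ^ 2 + x * y + y ^ 2) / (x ^ 3 * y ^ 3 * (x + y)), by positivity,
    by field_simp; ring⟩

lemma Finset.forall_not_pos_iff_forall_not_neg_of_sum_eq_zero {ι R : Type*} [CommRing R]
    [LinearOrder R] [IsStrictOrderedRing R] {s : Finset ι} {f g : ι → R}
    (hsum : ∑ i ∈ s, f i = 0) (hfg : ∀ i ∈ s, ∃ κ > 0, f i = κ * g i) :
    (∀ i ∈ s, ¬ 0 < g i) ↔ (∀ i ∈ s, ¬ g i < 0) := by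
  constructor
  · intro hg i hi hneg
    have hf : ∀ j ∈ s, f j ≤ 0 := fun j hj ↦ by
      obtain ⟨κ, hκ, hfj⟩ := hfg j hj
      exact hfj ▸ mul_nonpos_of_nonneg_of_nonpos hκ.le (not_lt.1 (hg j hj))
    obtain ⟨κ, hκ, hfi⟩ := hfg i hi
    exact (mul_neg_of_pos_of_neg hκ hneg).ne (hfi ▸ (sum_eq_zero_iff_of_nonpos hf).1 hsum i hi)
  · intro hg i hi hpos
    have hf : ∀ j ∈ s, 0 ≤ f j := fun j hj ↦ by
      obtain ⟨κ, hκ, hfj⟩ := hfg j hj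
      exact hfj ▸ mul_nonneg hκ.le (not_lt.1 (hg j hj))
    obtain ⟨κ, hκ, hfi⟩ := hfg i hi
    exact (mul_pos hκ hpos).ne' (hfi ▸ (sum_eq_zero_iff_of_nonneg hf).1 hsum i hi)

section CentralConfiguration

variable {ι : Type*} [Fintype ι] [DecidableEq ι] {q : ι → EuclideanSpace ℝ (Fin 2)}
  {m : ι → ℝ} {lam : ℝ}

lemma lam_mul_wedge_eq_sum
    (hcc : ∀ i, lam • q i = ∑ j ∈ univ.erase i, (m j / dist (q i) (q j) ^ 3) • (q j - q i))
    (i k : ι) :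
    lam * wedge (q k - q i) (q i) = ∑ j ∈ (univ.erase i).erase k,
      m j / dist (q i) (q j) ^ 3 * wedge (q k - q i) (q j - q i) := by
  have h := congrArg (wedgeₗ (q k - q i)) (hcc i)
  simp only [map_smul, map_sum, smul_eq_mul, wedgeₗ_apply] at h
  exact h.trans (sum_erase _ (by simp only [wedge_self, mul_zero])).symm

/-- The Krediet–Laura–Andoyer equation for the pair `i, k`. -/
lemma sum_div_dist_sub_mul_wedge_eq_zero
    (hcc : ∀ i, lam • q i = ∑ j ∈ univ.erase i, (m j / dist (q i) (q j) ^ 3) • (q j - q i))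
    (i k : ι) :
    ∑ j ∈ (univ.erase k).erase i, (m j / dist (q i) (q j) ^ 3 - m j / dist (q k) (q j) ^ 3)
      * wedge (q k - q i) (q j - q i) = 0 := by
  have hi := lam_mul_wedge_eq_sum hcc i k
  have hk := lam_mul_wedge_eq_sum hcc k i
  rw [erase_right_comm] at hi
  simp only [wedge_sub_sub_sub_comm (q i) (q k)] at hk
  calc _ = ∑ j ∈ (univ.erase k).erase i, m j / dist (q i) (q j) ^ 3 * wedge (q k - q i) (q j - q i)
        + ∑ j ∈ (univ.erase k).erase i,
          m j / dist (q k) (q j) ^ 3 * -wedge (q k - q i) (q j - q i) := by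
        rw [← sum_add_distrib]; exact sum_congr rfl fun j _ ↦ by ring
    _ = lam * wedge (q k - q i) (q i) + lam * wedge (q i - q k) (q k) := by rw [hi, hk]
    _ = 0 := by simp only [wedge, PiLp.sub_apply]; ring

end CentralConfiguration

/-- A point `z` lies in the interior of the union of the first and third quadrants iff
`wedge (q b - q a) (z - q a) * (dist z (q a) ^ 2 - dist z (q b) ^ 2) > 0`, and in the interior
of the union of the second and fourth iff this product is `< 0`. -/
theorem stmt11_general (n : ℕ) (q : Fin n → EuclideanSpace ℝ (Fin 2)) (m : Fin n → ℝ)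
    (lam : ℝ) (hm : ∀ i, 0 < m i) (hq : ∀ i j, i ≠ j → q i ≠ q j)
    (hcc : ∀ i, lam • q i
      = ∑ j ∈ Finset.univ.erase i, (m j / dist (q i) (q j) ^ 3) • (q j - q i))
    (a b : Fin n) :
    (∀ j, j ≠ a → j ≠ b →
        ¬ 0 < wedge (q b - q a) (q j - q a)
              * (dist (q j) (q a) ^ 2 - dist (q j) (q b) ^ 2))
      ↔ (∀ j, j ≠ a → j ≠ b →
        ¬ wedge (q b - q a) (q j - q a)
              * (dist (q j) (q a) ^ 2 - dist (q j) (q b) ^ 2) < 0) := by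
  have hkla : ∑ j ∈ (univ.erase b).erase a,
      (m j / dist (q b) (q j) ^ 3 - m j / dist (q a) (q j) ^ 3)
        * wedge (q b - q a) (q j - q a) = 0 := by
    rw [← neg_eq_zero, ← sum_neg_distrib, ← sum_div_dist_sub_mul_wedge_eq_zero hcc a b]
    exact sum_congr rfl fun j _ ↦ by ring
  have hfactor : ∀ j ∈ (univ.erase b).erase a, ∃ κ > 0,
      (m j / dist (q b) (q j) ^ 3 - m j / dist (q a) (q j) ^ 3)
        * wedge (q b - q a) (q j - q a)
      = κ * (wedge (q b - q a) (q j - q a) * (dist (q j) (q a) ^ 2 - dist (q j) (q b) ^ 2)) := by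
    intro j hj
    obtain ⟨hja, hjb⟩ : j ≠ a ∧ j ≠ b := by simpa [and_comm] using hj
    obtain ⟨κ, hκ, h⟩ := exists_pos_div_pow_three_sub_eq_mul_sq_sub (hm j)
      (dist_pos.2 (hq j a hja)) (dist_pos.2 (hq j b hjb))
    exact ⟨κ, hκ, by rw [dist_comm (q b), dist_comm (q a), h]; ring⟩
  simpa only [mem_erase, mem_univ, and_true, and_imp] using
    forall_not_pos_iff_forall_not_neg_of_sum_eq_zero hkla hfactor

/-- Perpendicular bisector theorem (Conley).  With axes the line `q a q b` and the
perpendicular bisector of the segment, a point `z` lies in the interior of the union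
of the first and third closed quadrants iff
`wedge (q b − q a) (z − q a) * (dist z (q a)² − dist z (q b)²) > 0`,
and in the interior of the union of the second and fourth iff this product is `< 0`. -/
theorem stmt11 (n : ℕ) (q : Fin n → EuclideanSpace ℝ (Fin 2)) (m : Fin n → ℝ)
    (lam : ℝ) (hm : ∀ i, 0 < m i) (hq : ∀ i j, i ≠ j → q i ≠ q j)
    (hcom : ∑ i, m i • q i = 0)
    (hcc : ∀ i, lam • q i
      = ∑ j ∈ Finset.univ.erase i, (m j / dist (q i) (q j) ^ 3) • (q j - q i))
    (a b : Fin n) (hab : a ≠ b) :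
    (∀ j, j ≠ a → j ≠ b →
        ¬ 0 < wedge (q b - q a) (q j - q a)
              * (dist (q j) (q a) ^ 2 - dist (q j) (q b) ^ 2))
      ↔ (∀ j, j ≠ a → j ≠ b →
        ¬ wedge (q b - q a) (q j - q a)
              * (dist (q j) (q a) ^ 2 - dist (q j) (q b) ^ 2) < 0) :=
  stmt11_general n q m lam hm hq hcc a b
end

section
/- For a 5-body planar central configuration whose convex hull is the triangle q_1 q_2 q_3, with q_4, q_5 interior points labeled so that q_1, q_2, q_5, q_4 in counterclockwise order form a convex quadrilateral, the following distance inequalities hold: r_{15} > r_{45}, r_{24} > r_{45}, r_{15} > r_{14}, r_{24} > r_{25}, r_{13} > r_{14}, r_{23} > r_{25}. -/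
/-!
Perpendicular bisector theorem: subtracting the central configuration equations of bodies `i`
and `j` and taking the wedge product with `q j - q i` gives
`∑ k, m k * (r_ik⁻³ - r_jk⁻³) * orient (q i) (q j) (q k) = 0`. Each summand has the sign of
`(r_jk - r_ik) * orient (q i) (q j) (q k)`, so the remaining bodies cannot all lie in the closure
of one pair of opposite quadrants cut out by the line `q i q j` and its perpendicular bisector with
one of them in the open quadrants.

Each inequality is proved by contradiction: its negation puts the three other bodies in such a
pair of quadrants for a suitable pair `i, j`. The positions come from elementary geometry: if `p`
lies in a triangle and `x ≠ p`, some vertex is strictly nearer to `p` than to `x`; a line through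
an interior point of a triangle has vertices strictly on both sides; and in a convex
quadrilateral the diagonals are together longer than two opposite sides.
-/

open Finset

open RealInnerProductSpace

local notation "ℝ²" => EuclideanSpace ℝ (Fin 2)

section InnerProductSpace

variable {E : Type*} [NormedAddCommGroup E] [InnerProductSpace ℝ E]

theorem dist_le_dist_iff_norm_sq_le_two_inner {x y z : E} :
    dist x z ≤ dist x y ↔ ‖z - y‖ ^ 2 ≤ 2 * ⟪x - y, z - y⟫ := by
  rw [← sq_le_sq₀ dist_nonneg dist_nonneg, dist_eq_norm, dist_eq_norm,
    show x - z = (x - y) - (z - y) by abel, norm_sub_sq_real]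
  constructor <;> intro h <;> linarith

theorem convex_setOf_dist_le_dist (x y : E) : Convex ℝ {z : E | dist z x ≤ dist z y} := by
  have : {z : E | dist z x ≤ dist z y} =
      innerₗ E (y - x) ⁻¹' Set.Iic ((‖y‖ ^ 2 - ‖x‖ ^ 2) / 2) := by
    ext z
    simp only [Set.mem_ofPred_eq, Set.mem_preimage, Set.mem_Iic, innerₗ_apply_apply, dist_eq_norm,
      ← sq_le_sq₀ (norm_nonneg _) (norm_nonneg _), norm_sub_sq_real, inner_sub_right,
      real_inner_comm z]
    constructor <;> intro h <;> linarith
  rw [this]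
  exact (convex_Iic _).linear_preimage _

theorem exists_dist_lt_of_mem_convexHull {s : Set E} {p x : E} (hp : p ∈ convexHull ℝ s)
    (hx : x ≠ p) : ∃ a ∈ s, dist a p < dist a x := by
  by_contra! h
  have : dist p x ≤ dist p p := convexHull_min h (convex_setOf_dist_le_dist x p) hp
  rw [dist_self, dist_le_zero] at this
  exact hx this.symm

theorem exists_lt_of_mem_interior_convexHull [CompleteSpace E] {s : Set E} {p : E}
    (hp : p ∈ interior (convexHull ℝ s)) {f : E →L[ℝ] ℝ} (hf : f ≠ 0) :
    ∃ a ∈ s, f p < f a := by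
  by_contra! h
  have hsub : convexHull ℝ s ⊆ f ⁻¹' Set.Iic (f p) :=
    convexHull_min h ((convex_Iic _).linear_preimage (f : E →ₗ[ℝ] ℝ))
  have hsurj : Function.Surjective f :=
    LinearMap.surjective_iff_ne_zero.mpr fun h0 => hf (ContinuousLinearMap.coe_injective h0)
  have := interior_mono hsub hp
  rw [f.interior_preimage hsurj, interior_Iic] at this
  exact lt_irrefl (f p) this

theorem dist_lt_of_mem_convexHull_triple {a b c p x : E} (hp : p ∈ convexHull ℝ {a, b, c})
    (hx : x ≠ p) (ha : dist a x ≤ dist a p) (hb : dist b x ≤ dist b p) :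
    dist c p < dist c x := by
  obtain ⟨z, hz, hlt⟩ := exists_dist_lt_of_mem_convexHull hp hx
  rcases hz with rfl | rfl | rfl
  · linarith
  · linarith
  · exact hlt

end InnerProductSpace

noncomputable def orient (a b c : ℝ²) : ℝ := wedge (b - a) (c - a)

theorem orient_rotate (a b c : ℝ²) : orient b c a = orient a b c := by
  simp only [orient, wedge, PiLp.sub_apply]; ring

theorem orient_swap (a b c : ℝ²) : orient b a c = -orient a b c := by
  simp only [orient, wedge, PiLp.sub_apply]; ring

@[simp] theorem orient_self_left (a b : ℝ²) : orient a b a = 0 := by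
  simp only [orient, wedge, PiLp.sub_apply]; ring

@[simp] theorem orient_self_right (a b : ℝ²) : orient a b b = 0 := by
  simp only [orient, wedge, PiLp.sub_apply]; ring

theorem wedge_sub_sub_eq_orient (a b c : ℝ²) : wedge (b - a) (c - b) = orient a b c := by
  simp only [orient, wedge, PiLp.sub_apply]; ring

noncomputable def wedgeCLM (d : ℝ²) : ℝ² →L[ℝ] ℝ :=
  d 0 • EuclideanSpace.proj 1 - d 1 • EuclideanSpace.proj 0

@[simp] theorem wedgeCLM_apply (d z : ℝ²) : wedgeCLM d z = wedge d z := by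
  simp [wedgeCLM, wedge]

theorem wedgeCLM_ne_zero {d : ℝ²} (hd : d ≠ 0) : wedgeCLM d ≠ 0 := by
  intro h0
  have h₀ := congrArg (· (EuclideanSpace.single 0 1)) h0
  have h₁ := congrArg (· (EuclideanSpace.single 1 1)) h0
  simp [wedge] at h₀ h₁
  exact hd (by ext i; fin_cases i <;> simp [h₀, h₁])

theorem norm_sq_mul_wedge (u v w : ℝ²) :
    ‖w‖ ^ 2 * wedge u v = ⟪u, w⟫ * wedge w v - ⟪v, w⟫ * wedge w u := by
  rw [← real_inner_self_eq_norm_sq]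
  simp only [PiLp.inner_apply, Fin.sum_univ_two, wedge, RCLike.inner_apply,
    conj_trivial]
  ring

theorem wedge_neg_of_inner_pos {u v w : ℝ²} (hu : 0 < ⟪u, w⟫) (hv : 0 < ⟪v, w⟫)
    (hwu : 0 < wedge w u) (hwv : wedge w v < 0) : wedge u v < 0 := by
  have h := norm_sq_mul_wedge u v w
  have hneg : ‖w‖ ^ 2 * wedge u v < 0 := by
    nlinarith [mul_pos hu hwu, mul_pos hv (neg_pos.2 hwv)]
  exact neg_of_mul_neg_right hneg (sq_nonneg _)

theorem orient_neg_of_dist_le {a b c e : ℝ²} (hca : orient c e a < 0) (hcb : 0 < orient c e b)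
    (ha : dist a c ≤ dist a e) (hb : dist b c ≤ dist b e) : orient e a b < 0 := by
  have hw : c - e ≠ 0 := by
    intro h0
    rw [sub_eq_zero.mp h0, orient, sub_self] at hca
    simp [wedge] at hca
  have hw2 : 0 < ‖c - e‖ ^ 2 := by positivity
  rw [dist_le_dist_iff_norm_sq_le_two_inner] at ha hb
  apply wedge_neg_of_inner_pos (w := c - e) (by linarith) (by linarith)
  · have : orient c e a = -wedge (c - e) (a - e) := by
      simp only [orient, wedge, PiLp.sub_apply]; ring
    linarith
  · have : orient c e b = -wedge (c - e) (b - e) := by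
      simp only [orient, wedge, PiLp.sub_apply]; ring
    linarith

structure ConvexQuad (A B C D : ℝ²) : Prop where
  abc : 0 < orient A B C
  bcd : 0 < orient B C D
  cda : 0 < orient C D A
  dab : 0 < orient D A B

theorem ConvexQuad.rotate {A B C D : ℝ²} (h : ConvexQuad A B C D) : ConvexQuad B C D A :=
  ⟨h.bcd, h.cda, h.dab, h.abc⟩

/-- A weak form of `dist A C + dist B D > dist A B + dist C D`. -/
theorem ConvexQuad.dist_lt_of_dist_le {A B C D : ℝ²} (h : ConvexQuad A B C D)
    (hB : dist B D ≤ dist B A) : dist C D < dist C A := by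
  by_contra! hC
  obtain ⟨hABC, hBCD, hCDA, hDAB⟩ := h
  rw [dist_le_dist_iff_norm_sq_le_two_inner] at hB hC
  set u := B - A
  set v := C - A
  set w := D - A
  change 0 < wedge u v at hABC
  have hBCD' : orient B C D = wedge u v - wedge w v + wedge w u := by
    simp only [orient, wedge, u, v, w, PiLp.sub_apply]; ring
  have hCDA' : orient C D A = -wedge w v := by
    simp only [orient, wedge, v, w, PiLp.sub_apply]; ring
  have hDAB' : orient D A B = -wedge w u := by
    simp only [orient, wedge, u, w, PiLp.sub_apply]; ring
  have hC' : 2 * ⟪v, w⟫ ≤ ‖w‖ ^ 2 := by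
    have e1 : A - D = -w := by simp [w]
    have e2 : C - D = v - w := by simp [v, w]
    rw [e1, e2, norm_neg, inner_neg_right, inner_sub_left, real_inner_self_eq_norm_sq] at hC
    linarith
  have hw : 0 < ‖w‖ ^ 2 := by
    have : w ≠ 0 := by rintro h0; simp [h0, wedge] at hDAB'; linarith
    positivity
  have key := norm_sq_mul_wedge u v w
  simp only [hBCD', hCDA', hDAB'] at hBCD hCDA hDAB
  nlinarith [mul_pos hw hABC, mul_pos hw hBCD,
    mul_nonpos_of_nonneg_of_nonpos (by linarith : 0 ≤ ⟪u, w⟫ - ‖w‖ ^ 2 / 2)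
      (by linarith : wedge w v ≤ 0),
    mul_nonpos_of_nonneg_of_nonpos (by linarith : 0 ≤ ‖w‖ ^ 2 / 2 - ⟪v, w⟫)
      (by linarith : wedge w u ≤ 0)]

theorem wedge_pos_of_mem_interior_convexHull {a b c p d : ℝ²}
    (hp : p ∈ interior (convexHull ℝ {a, b, c})) (hd : d ≠ 0) (ha : wedge d (a - p) ≤ 0)
    (hb : wedge d (b - p) ≤ 0) : 0 < wedge d (c - p) := by
  have hsub : ∀ z, wedge d (z - p) = wedgeCLM d z - wedgeCLM d p := fun z => by
    simp only [wedgeCLM_apply, wedge, PiLp.sub_apply]; ring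
  obtain ⟨z, hz, hlt⟩ := exists_lt_of_mem_interior_convexHull hp (wedgeCLM_ne_zero hd)
  rcases hz with rfl | rfl | rfl <;> linarith [hsub z]

theorem orient_pos_of_mem_interior_convexHull {a b c p x : ℝ²}
    (hp : p ∈ interior (convexHull ℝ {a, b, c})) (hx : x ≠ p) (ha : orient p x a ≤ 0)
    (hb : orient p x b ≤ 0) : 0 < orient p x c :=
  wedge_pos_of_mem_interior_convexHull hp (sub_ne_zero.2 hx) ha hb

theorem orient_neg_of_mem_interior_convexHull {a b c p x : ℝ²}
    (hp : p ∈ interior (convexHull ℝ {a, b, c})) (hx : x ≠ p) (ha : 0 ≤ orient p x a)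
    (hb : 0 ≤ orient p x b) : orient p x c < 0 := by
  have h : ∀ z, wedge (p - x) (z - p) = -orient p x z := fun z => by
    simp only [orient, wedge, PiLp.sub_apply]; ring
  have := wedge_pos_of_mem_interior_convexHull hp (sub_ne_zero.2 hx.symm)
    (by rw [h]; linarith) (by rw [h]; linarith)
  rw [h] at this
  linarith

section CentralConfig

variable {ι : Type*}

def IsCentralConfig [Fintype ι] [DecidableEq ι] {E : Type*} [NormedAddCommGroup E]
    [NormedSpace ℝ E] (q : ι → E) (m : ι → ℝ) (lam : ℝ) : Prop :=
  ∀ i, -(lam • q i) = ∑ j ∈ univ.erase i, (m j / dist (q i) (q j) ^ 3) • (q j - q i)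

/-- Positive exactly when `q k` is strictly nearer to `q i` than to `q j` and strictly left of the
line `q i → q j`, or strictly nearer to `q j` and strictly right of it. -/
noncomputable def bisectorProduct (q : ι → ℝ²) (i j k : ι) : ℝ :=
  (dist (q k) (q j) - dist (q k) (q i)) * orient (q i) (q j) (q k)

variable {q : ι → ℝ²} {m : ι → ℝ} {lam : ℝ}

theorem exists_pos_mul_bisectorProduct (hm : ∀ k, 0 < m k) (hq : Function.Injective q)
    (i j k : ι) : ∃ c, 0 < c ∧
      m k * ((dist (q k) (q i) ^ 3)⁻¹ - (dist (q k) (q j) ^ 3)⁻¹) * orient (q i) (q j) (q k) =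
        c * bisectorProduct q i j k := by
  by_cases hki : k = i
  · subst hki; exact ⟨1, one_pos, by simp [bisectorProduct]⟩
  by_cases hkj : k = j
  · subst hkj; exact ⟨1, one_pos, by simp [bisectorProduct]⟩
  have ha : 0 < dist (q k) (q i) := dist_pos.2 (hq.ne hki)
  have hb : 0 < dist (q k) (q j) := dist_pos.2 (hq.ne hkj)
  set a := dist (q k) (q i)
  set b := dist (q k) (q j)
  refine ⟨m k * (a ^ 2 + a * b + b ^ 2) / (a ^ 3 * b ^ 3), by have := hm k; positivity, ?_⟩
  simp only [bisectorProduct]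
  field_simp
  ring

variable [Fintype ι] [DecidableEq ι]

theorem IsCentralConfig.sum_mul_orient_eq_zero (h : IsCentralConfig q m lam) (i j : ι) :
    ∑ k, m k * ((dist (q k) (q i) ^ 3)⁻¹ - (dist (q k) (q j) ^ 3)⁻¹) *
      orient (q i) (q j) (q k) = 0 := by
  set d := q j - q i
  -- The `k = l` summand vanishes, and `wedge d (q k - q l) = orient (q i) (q j) (q k)`.
  have row : ∀ l, l = i ∨ l = j →
      -(lam * wedge d (q l)) = ∑ k, m k / dist (q k) (q l) ^ 3 * orient (q i) (q j) (q k) := by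
    intro l hl
    have := congrArg (wedgeCLM d) (h l)
    rw [Finset.sum_erase univ (by simp), map_neg, map_smul, map_sum] at this
    simp only [map_smul, wedgeCLM_apply, smul_eq_mul] at this
    rw [this]
    refine Finset.sum_congr rfl fun k _ => ?_
    rw [dist_comm]
    congr 1
    rcases hl with rfl | rfl
    · rfl
    · simp only [orient, wedge, d, PiLp.sub_apply]; ring
  have hd : wedge d (q i) = wedge d (q j) := by
    simp only [wedge, d, PiLp.sub_apply]; ring
  calc _ = ∑ k, m k / dist (q k) (q i) ^ 3 * orient (q i) (q j) (q k)
        - ∑ k, m k / dist (q k) (q j) ^ 3 * orient (q i) (q j) (q k) := by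
        rw [← Finset.sum_sub_distrib]
        exact Finset.sum_congr rfl fun k _ => by ring
    _ = 0 := by rw [← row i (Or.inl rfl), ← row j (Or.inr rfl), hd, sub_self]

theorem IsCentralConfig.exists_sum_mul_bisectorProduct_eq_zero (h : IsCentralConfig q m lam)
    (hm : ∀ k, 0 < m k) (hq : Function.Injective q) (i j : ι) :
    ∃ c : ι → ℝ, (∀ k, 0 < c k) ∧ ∑ k, c k * bisectorProduct q i j k = 0 := by
  choose c hc hterm using exists_pos_mul_bisectorProduct hm hq i j
  exact ⟨c, hc, by simp only [← hterm]; exact h.sum_mul_orient_eq_zero i j⟩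

theorem IsCentralConfig.false_of_bisectorProduct_pos (h : IsCentralConfig q m lam)
    (hm : ∀ k, 0 < m k) (hq : Function.Injective q) {i j k₁ k₂ k₃ : ι}
    (hcover : ∀ k, k = i ∨ k = j ∨ k = k₁ ∨ k = k₂ ∨ k = k₃)
    (h₁ : 0 < bisectorProduct q i j k₁) (h₂ : 0 ≤ bisectorProduct q i j k₂)
    (h₃ : 0 ≤ bisectorProduct q i j k₃) : False := by
  obtain ⟨c, hc, hsum⟩ := h.exists_sum_mul_bisectorProduct_eq_zero hm hq i j
  have hnonneg : ∀ k ∈ univ, 0 ≤ c k * bisectorProduct q i j k := fun k _ => by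
    refine mul_nonneg (hc k).le ?_
    rcases hcover k with rfl | rfl | rfl | rfl | rfl <;>
      first | assumption | exact h₁.le | simp [bisectorProduct]
  have := (Finset.sum_eq_zero_iff_of_nonneg hnonneg).1 hsum k₁ (mem_univ _)
  exact (mul_pos (hc k₁) h₁).ne' this

theorem IsCentralConfig.false_of_bisectorProduct_neg (h : IsCentralConfig q m lam)
    (hm : ∀ k, 0 < m k) (hq : Function.Injective q) {i j k₁ k₂ k₃ : ι}
    (hcover : ∀ k, k = i ∨ k = j ∨ k = k₁ ∨ k = k₂ ∨ k = k₃)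
    (h₁ : bisectorProduct q i j k₁ < 0) (h₂ : bisectorProduct q i j k₂ ≤ 0)
    (h₃ : bisectorProduct q i j k₃ ≤ 0) : False := by
  obtain ⟨c, hc, hsum⟩ := h.exists_sum_mul_bisectorProduct_eq_zero hm hq i j
  have hnonpos : ∀ k ∈ univ, c k * bisectorProduct q i j k ≤ 0 := fun k _ => by
    refine mul_nonpos_of_nonneg_of_nonpos (hc k).le ?_
    rcases hcover k with rfl | rfl | rfl | rfl | rfl <;>
      first | assumption | exact h₁.le | simp [bisectorProduct]
  have := (Finset.sum_eq_zero_iff_of_nonpos hnonpos).1 hsum k₁ (mem_univ _)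
  exact (mul_neg_of_pos_of_neg (hc k₁) h₁).ne this

end CentralConfig

/-- Bodies `1, …, 5` of the paper are `q 0, …, q 4`. -/
structure IsTriangleHullConfig (q : Fin 5 → ℝ²) : Prop where
  injective : Function.Injective q
  three_mem_interior : q 3 ∈ interior (convexHull ℝ {q 0, q 1, q 2})
  four_mem_interior : q 4 ∈ interior (convexHull ℝ {q 0, q 1, q 2})
  convexQuad : ConvexQuad (q 0) (q 1) (q 4) (q 3)

namespace IsTriangleHullConfig

variable {q : Fin 5 → ℝ²} {m : Fin 5 → ℝ} {lam : ℝ}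

theorem orient_340_neg (h : IsTriangleHullConfig q) : orient (q 3) (q 4) (q 0) < 0 := by
  linarith [orient_swap (q 4) (q 3) (q 0), h.convexQuad.cda]

theorem orient_341_neg (h : IsTriangleHullConfig q) : orient (q 3) (q 4) (q 1) < 0 := by
  linarith [orient_swap (q 4) (q 3) (q 1), orient_rotate (q 1) (q 4) (q 3), h.convexQuad.bcd]

theorem orient_342_pos (h : IsTriangleHullConfig q) : 0 < orient (q 3) (q 4) (q 2) :=
  orient_pos_of_mem_interior_convexHull h.three_mem_interior (h.injective.ne (by decide))
    h.orient_340_neg.le h.orient_341_neg.le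

theorem orient_302_neg (h : IsTriangleHullConfig q) : orient (q 3) (q 0) (q 2) < 0 :=
  orient_neg_of_mem_interior_convexHull h.three_mem_interior (h.injective.ne (by decide))
    (orient_self_right _ _).ge h.convexQuad.dab.le

theorem orient_412_pos (h : IsTriangleHullConfig q) : 0 < orient (q 4) (q 1) (q 2) := by
  refine orient_pos_of_mem_interior_convexHull h.four_mem_interior (h.injective.ne (by decide))
    ?_ (orient_self_right _ _).le
  linarith [orient_swap (q 1) (q 4) (q 0), orient_rotate (q 0) (q 1) (q 4), h.convexQuad.abc]

theorem orient_321_neg (h : IsTriangleHullConfig q) : orient (q 3) (q 2) (q 1) < 0 := by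
  have hp := h.three_mem_interior
  rw [Set.pair_comm] at hp
  refine orient_neg_of_mem_interior_convexHull hp (h.injective.ne (by decide)) ?_
    (orient_self_right _ _).ge
  linarith [orient_swap (q 2) (q 3) (q 0), orient_rotate (q 2) (q 3) (q 0), h.orient_302_neg]

theorem orient_420_pos (h : IsTriangleHullConfig q) : 0 < orient (q 4) (q 2) (q 0) := by
  have hp := h.four_mem_interior
  rw [Set.insert_comm, Set.pair_comm] at hp
  refine orient_pos_of_mem_interior_convexHull hp (h.injective.ne (by decide)) ?_
    (orient_self_right _ _).le
  linarith [orient_swap (q 2) (q 4) (q 1), orient_rotate (q 2) (q 4) (q 1), h.orient_412_pos]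

theorem dist03_lt_dist04 (h : IsTriangleHullConfig q) (hcc : IsCentralConfig q m lam)
    (hm : ∀ i, 0 < m i) : dist (q 0) (q 3) < dist (q 0) (q 4) := by
  by_contra! h04
  have h14 : dist (q 1) (q 4) < dist (q 1) (q 3) :=
    h.convexQuad.rotate.rotate.rotate.dist_lt_of_dist_le h04
  have h24 : dist (q 2) (q 3) < dist (q 2) (q 4) :=
    dist_lt_of_mem_convexHull_triple (interior_subset h.three_mem_interior)
      (h.injective.ne (by decide)) h04 h14.le
  refine hcc.false_of_bisectorProduct_pos hm h.injective (i := 3) (j := 4) (k₁ := 1) (k₂ := 0)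
    (k₃ := 2) (by decide) ?_ ?_ ?_
  · exact mul_pos_of_neg_of_neg (by linarith) h.orient_341_neg
  · exact mul_nonneg_of_nonpos_of_nonpos (by linarith) h.orient_340_neg.le
  · exact mul_nonneg (by linarith) h.orient_342_pos.le

theorem dist14_lt_dist13 (h : IsTriangleHullConfig q) (hcc : IsCentralConfig q m lam)
    (hm : ∀ i, 0 < m i) : dist (q 1) (q 4) < dist (q 1) (q 3) := by
  by_contra! h13
  have h03 := h.dist03_lt_dist04 hcc hm
  have h24 : dist (q 2) (q 4) < dist (q 2) (q 3) :=
    dist_lt_of_mem_convexHull_triple (interior_subset h.four_mem_interior)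
      (h.injective.ne (by decide)) h03.le h13
  refine hcc.false_of_bisectorProduct_neg hm h.injective (i := 3) (j := 4) (k₁ := 0) (k₂ := 1)
    (k₃ := 2) (by decide) ?_ ?_ ?_
  · exact mul_neg_of_pos_of_neg (by linarith) h.orient_340_neg
  · exact mul_nonpos_of_nonneg_of_nonpos (by linarith) h.orient_341_neg.le
  · exact mul_nonpos_of_nonpos_of_nonneg (by linarith) h.orient_342_pos.le

theorem dist34_lt_dist04 (h : IsTriangleHullConfig q) (hcc : IsCentralConfig q m lam)
    (hm : ∀ i, 0 < m i) : dist (q 3) (q 4) < dist (q 0) (q 4) := by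
  by_contra! h04
  rw [dist_comm (q 3), dist_comm (q 0)] at h04
  have h10 : dist (q 1) (q 0) < dist (q 1) (q 3) := by
    by_contra! h13
    exact (h.convexQuad.dist_lt_of_dist_le h13).not_ge h04
  have h20 : dist (q 2) (q 3) < dist (q 2) (q 0) :=
    dist_lt_of_mem_convexHull_triple (interior_subset h.three_mem_interior)
      (h.injective.ne (by decide)) (by simp) h10.le
  refine hcc.false_of_bisectorProduct_neg hm h.injective (i := 0) (j := 3) (k₁ := 1) (k₂ := 4)
    (k₃ := 2) (by decide) ?_ ?_ ?_
  · exact mul_neg_of_pos_of_neg (by linarith)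
      (by linarith [orient_swap (q 3) (q 0) (q 1), h.convexQuad.dab])
  · exact mul_nonpos_of_nonneg_of_nonpos (by linarith)
      (by linarith [orient_rotate (q 0) (q 3) (q 4), h.orient_340_neg])
  · exact mul_nonpos_of_nonpos_of_nonneg (by linarith)
      (by linarith [orient_swap (q 3) (q 0) (q 2), h.orient_302_neg])

theorem dist34_lt_dist13 (h : IsTriangleHullConfig q) (hcc : IsCentralConfig q m lam)
    (hm : ∀ i, 0 < m i) : dist (q 3) (q 4) < dist (q 1) (q 3) := by
  by_contra! h13
  rw [dist_comm (q 1)] at h13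
  have h01 : dist (q 0) (q 1) < dist (q 0) (q 4) :=
    h.convexQuad.rotate.rotate.dist_lt_of_dist_le h13
  have h21 : dist (q 2) (q 4) < dist (q 2) (q 1) :=
    dist_lt_of_mem_convexHull_triple (interior_subset h.four_mem_interior)
      (h.injective.ne (by decide)) h01.le (by simp)
  refine hcc.false_of_bisectorProduct_pos hm h.injective (i := 1) (j := 4) (k₁ := 0) (k₂ := 3)
    (k₃ := 2) (by decide) ?_ ?_ ?_
  · exact mul_pos (by linarith) (by linarith [orient_rotate (q 0) (q 1) (q 4), h.convexQuad.abc])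
  · exact mul_nonneg (by linarith [dist_comm (q 3) (q 4)]) h.convexQuad.bcd.le
  · exact mul_nonneg_of_nonpos_of_nonpos (by linarith)
      (by linarith [orient_swap (q 4) (q 1) (q 2), h.orient_412_pos])

theorem dist03_lt_dist02 (h : IsTriangleHullConfig q) (hcc : IsCentralConfig q m lam)
    (hm : ∀ i, 0 < m i) : dist (q 0) (q 3) < dist (q 0) (q 2) := by
  by_contra! h02
  have h230 : orient (q 2) (q 3) (q 0) < 0 := by
    linarith [orient_rotate (q 2) (q 3) (q 0), h.orient_302_neg]
  have h234 : 0 < orient (q 2) (q 3) (q 4) := by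
    linarith [orient_rotate (q 2) (q 3) (q 4), h.orient_342_pos]
  have h13 : dist (q 1) (q 3) < dist (q 1) (q 2) := by
    by_contra! h12
    have := dist_lt_of_mem_convexHull_triple (interior_subset h.three_mem_interior)
      (h.injective.ne (by decide)) h02 h12
    exact this.not_ge (by simp)
  have h43 : dist (q 4) (q 3) ≤ dist (q 4) (q 2) := by
    by_contra! h42
    have := orient_neg_of_dist_le h230 h234 h02 h42.le
    linarith [orient_rotate (q 4) (q 3) (q 0), h.convexQuad.cda]
  refine hcc.false_of_bisectorProduct_neg hm h.injective (i := 2) (j := 3) (k₁ := 1) (k₂ := 0)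
    (k₃ := 4) (by decide) ?_ ?_ ?_
  · exact mul_neg_of_neg_of_pos (by linarith)
      (by linarith [orient_swap (q 3) (q 2) (q 1), h.orient_321_neg])
  · exact mul_nonpos_of_nonneg_of_nonpos (by linarith) h230.le
  · exact mul_nonpos_of_nonpos_of_nonneg (by linarith) h234.le

theorem dist14_lt_dist12 (h : IsTriangleHullConfig q) (hcc : IsCentralConfig q m lam)
    (hm : ∀ i, 0 < m i) : dist (q 1) (q 4) < dist (q 1) (q 2) := by
  by_contra! h12
  have h241 : 0 < orient (q 2) (q 4) (q 1) := by
    linarith [orient_rotate (q 2) (q 4) (q 1), h.orient_412_pos]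
  have h243 : orient (q 2) (q 4) (q 3) < 0 := by
    linarith [orient_rotate (q 2) (q 4) (q 3), orient_swap (q 3) (q 4) (q 2), h.orient_342_pos]
  have h04 : dist (q 0) (q 4) < dist (q 0) (q 2) := by
    by_contra! h02
    have := dist_lt_of_mem_convexHull_triple (interior_subset h.four_mem_interior)
      (h.injective.ne (by decide)) h02 h12
    exact this.not_ge (by simp)
  have h34 : dist (q 3) (q 4) ≤ dist (q 3) (q 2) := by
    by_contra! h32
    have := orient_neg_of_dist_le h243 h241 h32.le h12
    linarith [orient_rotate (q 1) (q 4) (q 3), h.convexQuad.bcd]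
  refine hcc.false_of_bisectorProduct_pos hm h.injective (i := 2) (j := 4) (k₁ := 0) (k₂ := 1)
    (k₃ := 3) (by decide) ?_ ?_ ?_
  · exact mul_pos_of_neg_of_neg (by linarith)
      (by linarith [orient_swap (q 4) (q 2) (q 0), h.orient_420_pos])
  · exact mul_nonneg (by linarith) h241.le
  · exact mul_nonneg_of_nonpos_of_nonpos (by linarith) h243.le

end IsTriangleHullConfig

theorem stmt14_general (q : Fin 5 → EuclideanSpace ℝ (Fin 2)) (m : Fin 5 → ℝ)
    (lam : ℝ) (hm : ∀ i, 0 < m i) (hq : ∀ i j, i ≠ j → q i ≠ q j)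
    (hcc : ∀ i, -(lam • q i)
      = ∑ j ∈ Finset.univ.erase i, (m j / dist (q i) (q j) ^ 3) • (q j - q i))
    (h4 : q 3 ∈ interior (convexHull ℝ {q 0, q 1, q 2}))
    (h5 : q 4 ∈ interior (convexHull ℝ {q 0, q 1, q 2}))
    (hc1 : 0 < wedge (q 1 - q 0) (q 4 - q 1))
    (hc2 : 0 < wedge (q 4 - q 1) (q 3 - q 4))
    (hc3 : 0 < wedge (q 3 - q 4) (q 0 - q 3))
    (hc4 : 0 < wedge (q 0 - q 3) (q 1 - q 0)) :
    dist (q 0) (q 4) > dist (q 3) (q 4) ∧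
    dist (q 1) (q 3) > dist (q 3) (q 4) ∧
    dist (q 0) (q 4) > dist (q 0) (q 3) ∧
    dist (q 1) (q 3) > dist (q 1) (q 4) ∧
    dist (q 0) (q 2) > dist (q 0) (q 3) ∧
    dist (q 1) (q 2) > dist (q 1) (q 4) := by
  rw [wedge_sub_sub_eq_orient] at hc1 hc2 hc3 hc4
  have h : IsTriangleHullConfig q :=
    { injective := fun i j hij => by_contra fun hne => hq i j hne hij
      three_mem_interior := h4
      four_mem_interior := h5
      convexQuad := ⟨hc1, hc2, hc3, hc4⟩ }
  exact ⟨h.dist34_lt_dist04 hcc hm, h.dist34_lt_dist13 hcc hm, h.dist03_lt_dist04 hcc hm,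
    h.dist14_lt_dist13 hcc hm, h.dist03_lt_dist02 hcc hm, h.dist14_lt_dist12 hcc hm⟩

/-- Distance inequalities for a 5-body planar central configuration whose convex
hull is the triangle `q 0 q 1 q 2`, with the interior points `q 3`, `q 4` labeled so
that `q 0, q 1, q 4, q 3` is a convex quadrilateral in counterclockwise order.
(Bodies 1,2,3,4,5 of the paper are `q 0,…,q 4`.)  Conclusions:
`r₁₅>r₄₅`, `r₂₄>r₄₅`, `r₁₅>r₁₄`, `r₂₄>r₂₅`, `r₁₃>r₁₄`, `r₂₃>r₂₅`. -/
theorem stmt14 (q : Fin 5 → EuclideanSpace ℝ (Fin 2)) (m : Fin 5 → ℝ)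
    (lam : ℝ) (hm : ∀ i, 0 < m i) (hq : ∀ i j, i ≠ j → q i ≠ q j)
    (hcom : ∑ i, m i • q i = 0)
    (hcc : ∀ i, -(lam • q i)
      = ∑ j ∈ Finset.univ.erase i, (m j / dist (q i) (q j) ^ 3) • (q j - q i))
    (h4 : q 3 ∈ interior (convexHull ℝ {q 0, q 1, q 2}))
    (h5 : q 4 ∈ interior (convexHull ℝ {q 0, q 1, q 2}))
    (hc1 : 0 < wedge (q 1 - q 0) (q 4 - q 1))
    (hc2 : 0 < wedge (q 4 - q 1) (q 3 - q 4))
    (hc3 : 0 < wedge (q 3 - q 4) (q 0 - q 3))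
    (hc4 : 0 < wedge (q 0 - q 3) (q 1 - q 0)) :
    dist (q 0) (q 4) > dist (q 3) (q 4) ∧
    dist (q 1) (q 3) > dist (q 3) (q 4) ∧
    dist (q 0) (q 4) > dist (q 0) (q 3) ∧
    dist (q 1) (q 3) > dist (q 1) (q 4) ∧
    dist (q 0) (q 2) > dist (q 0) (q 3) ∧
    dist (q 1) (q 2) > dist (q 1) (q 4) :=
  stmt14_general q m lam hm hq hcc h4 h5 hc1 hc2 hc3 hc4
end

section
/- For a 5-body planar central configuration whose convex hull is the quadrilateral q_1 q_2 q_3 q_4 (vertices counterclockwise, q_5 interior), the diagonal satisfies r_{13} > r_{15}, and moreover r_{13} > r_{12} or r_{13} > r_{14}; the analogous statements hold under cyclic permutation of the indices 1,2,3,4. -/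
open Finset

/-!
Write `a b c d` for the vertices and `e` for the interior body. Taking the wedge product of the
equations of bodies `i, j` with `q j - q i` gives
`∑ₖ mₖ (1 / r_{ik}³ - 1 / r_{jk}³) [q_i q_j q_k] = 0`, with `[·]` the signed area (perpendicular
bisector theorem): the sign of the `k`-th term records on which sides of the line `q_i q_j` and of
the perpendicular bisector of `q_i q_j` the body `k` lies, so the other bodies cannot all contribute
with one sign, one of them strictly.

If `|a c| ≤ |a e|`, reflect the plane if necessary so that `e` lies weakly on the side of `d` of
the diagonal `a c`. Then `|d e| < |d c|` (a perpendicular bisector argument in the triangle `a c d`)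
and `|b c| ≤ |b e|` (the triangle inequality through the point where `b e` crosses `a c`), so all
terms of the identity for the pair `(c, e)` are nonnegative and the one of `d` is positive.

If `|a c| ≤ |a b|` and `|a c| ≤ |a d|`, convexity forces the angle `b c d` to be at least a right
angle, so `|c d| < |b d|` and `|c b| < |d b|`, and an affine function separating `e` from the
points closer to both `b` and `d` than to `c` shows `|e c| ≤ |e b|` or `|e c| ≤ |e d|`. The
identity for the pair `(b, c)`, resp. `(c, d)`, then has terms of one sign, one of them strict.

Relabeling the quadrilateral cyclically gives the other three vertices.
-/

open Filter Topology
open scoped InnerProductSpace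

local notation "P²" => EuclideanSpace ℝ (Fin 2)

namespace FiveBody

lemma sq_le_sq_of_dist_le {E : Type*} [SeminormedAddCommGroup E] {x y z w : E}
    (h : dist x y ≤ dist z w) : ‖x - y‖ ^ 2 ≤ ‖z - w‖ ^ 2 := by
  rw [← dist_eq_norm, ← dist_eq_norm]
  exact pow_le_pow_left₀ dist_nonneg h 2

section InnerProductSpace

variable {E : Type*} [NormedAddCommGroup E] [InnerProductSpace ℝ E]

lemma norm_sub_sq_sub_norm_sub_sq (z x y : E) :
    ‖z - x‖ ^ 2 - ‖z - y‖ ^ 2 = ⟪z, (2 : ℝ) • (y - x)⟫_ℝ + (‖x‖ ^ 2 - ‖y‖ ^ 2) := by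
  rw [norm_sub_sq_real, norm_sub_sq_real, real_inner_smul_right, inner_sub_right]
  ring

lemma inner_add_nonpos_of_mem_convexHull {s : Set E} {w : E} {k : ℝ}
    (hs : ∀ x ∈ s, ⟪x, w⟫_ℝ + k ≤ 0) {z : E} (hz : z ∈ convexHull ℝ s) : ⟪z, w⟫_ℝ + k ≤ 0 := by
  have hconv : Convex ℝ {x : E | ⟪x, w⟫_ℝ ≤ -k} :=
    convex_halfSpace_le ⟨fun x y ↦ inner_add_left x y w, fun c x ↦ real_inner_smul_left x w c⟩ _
  have : ⟪z, w⟫_ℝ ≤ -k :=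
    convexHull_min (fun x hx ↦ show ⟪x, w⟫_ℝ ≤ -k by linarith [hs x hx]) hconv hz
  linarith

/-- `a` and `c` lie weakly on the side of `c` of the perpendicular bisector of `c e`, and `e`, a
convex combination of `a, c, d`, lies strictly on the other side; hence so does `d`. -/
lemma dist_lt_dist_of_mem_convexHull {a c d e : E} (he : e ∈ convexHull ℝ {a, c, d})
    (hec : e ≠ c) (h : dist a c ≤ dist a e) : dist d e < dist d c := by
  by_contra! h'
  have key := inner_add_nonpos_of_mem_convexHull (w := (2 : ℝ) • (e - c)) (k := ‖c‖ ^ 2 - ‖e‖ ^ 2)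
    (s := {a, c, d}) ?_ he
  · rw [← norm_sub_sq_sub_norm_sub_sq, sub_self, norm_zero] at key
    have : 0 < ‖e - c‖ := norm_pos_iff.2 (sub_ne_zero.2 hec)
    nlinarith
  · rintro x (rfl | rfl | rfl)
    all_goals rw [← norm_sub_sq_sub_norm_sub_sq]
    · linarith [sq_le_sq_of_dist_le h]
    · simp
    · linarith [sq_le_sq_of_dist_le h']

lemma dist_le_or_dist_le_of_mem_convexHull {a b c d e : E} (he : e ∈ convexHull ℝ {a, b, c, d})
    (hobtuse : ⟪b - c, d - c⟫_ℝ ≤ 0) (hb : dist a c ≤ dist a b) (hd : dist a c ≤ dist a d) :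
    dist e c ≤ dist e b ∨ dist e c ≤ dist e d := by
  by_contra! ⟨heb, hed⟩
  have hpyth : ‖b - c‖ ^ 2 + ‖d - c‖ ^ 2 ≤ ‖b - d‖ ^ 2 := by
    rw [show b - d = (b - c) - (d - c) by abel, norm_sub_sq_real (b - c)]
    linarith
  set D := ‖d - c‖ ^ 2
  set X := ‖b - d‖ ^ 2
  have hD₀ : 0 ≤ D := by positivity
  have hXD : 0 ≤ X - D := by nlinarith [norm_nonneg (b - c)]
  -- an affine function, nonpositive at the four vertices but positive at `e`
  set F : E → ℝ := fun z ↦ D * (‖z - c‖ ^ 2 - ‖z - b‖ ^ 2) + (X - D) * (‖z - c‖ ^ 2 - ‖z - d‖ ^ 2)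
  have hF (z : E) : F z = ⟪z, (2 : ℝ) • (D • (b - c) + (X - D) • (d - c))⟫_ℝ
      + (D * (‖c‖ ^ 2 - ‖b‖ ^ 2) + (X - D) * (‖c‖ ^ 2 - ‖d‖ ^ 2)) := by
    simp only [F, norm_sub_sq_sub_norm_sub_sq, real_inner_smul_right, inner_add_right]
    ring
  have hFe : F e ≤ 0 := by
    rw [hF]
    refine inner_add_nonpos_of_mem_convexHull (fun x hx ↦ ?_) he
    rw [← hF]
    rcases hx with h | h | h | h <;> rw [h] <;> simp only [F, sub_self, norm_zero]
    · nlinarith [sq_le_sq_of_dist_le hb, sq_le_sq_of_dist_le hd]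
    · nlinarith
    · rw [norm_sub_rev c b, norm_sub_rev c d]
      nlinarith [norm_nonneg (b - c)]
    · rw [norm_sub_rev d b]
      nlinarith
  have hb' : ‖e - b‖ ^ 2 < ‖e - c‖ ^ 2 := by
    rw [← dist_eq_norm, ← dist_eq_norm]
    exact pow_lt_pow_left₀ heb dist_nonneg two_ne_zero
  have hd' : ‖e - d‖ ^ 2 < ‖e - c‖ ^ 2 := by
    rw [← dist_eq_norm, ← dist_eq_norm]
    exact pow_lt_pow_left₀ hed dist_nonneg two_ne_zero
  have hDpos : 0 < D := by
    refine hD₀.lt_of_ne fun h0 ↦ ?_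
    rw [eq_comm, sq_eq_zero_iff, norm_eq_zero, sub_eq_zero] at h0
    rw [h0] at hd'
    exact lt_irrefl _ hd'
  simp only [F] at hFe
  nlinarith [mul_pos hDpos (sub_pos.2 hb'), mul_nonneg hXD (sub_nonneg.2 hd'.le)]

lemma inner_nonpos_of_norm_le {A B D : E} {x y : ℝ} (hA : A = x • B + y • D) (hx : 0 < x)
    (hy : 0 < y) (hxy : 1 ≤ x + y) (hB : ‖A‖ ≤ ‖A - B‖) (hD : ‖A‖ ≤ ‖A - D‖) :
    ⟪B, D⟫_ℝ ≤ 0 := by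
  have hB' := pow_le_pow_left₀ (norm_nonneg _) hB 2
  have hD' := pow_le_pow_left₀ (norm_nonneg _) hD 2
  rw [norm_sub_sq_real] at hB' hD'
  have hAB : ⟪A, B⟫_ℝ = x * ‖B‖ ^ 2 + y * ⟪B, D⟫_ℝ := by
    rw [hA, inner_add_left, real_inner_smul_left, real_inner_smul_left, real_inner_self_eq_norm_sq,
      real_inner_comm]
  have hAD : ⟪A, D⟫_ℝ = x * ⟪B, D⟫_ℝ + y * ‖D‖ ^ 2 := by
    rw [hA, inner_add_left, real_inner_smul_left, real_inner_smul_left, real_inner_self_eq_norm_sq]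
  by_contra! hP
  have hx2 : x < 1 / 2 := by nlinarith [mul_pos hy hP]
  have hy2 : y < 1 / 2 := by nlinarith [mul_pos hx hP]
  linarith

lemma norm_lt_norm_sub_of_inner_nonpos {x y : E} (h : ⟪x, y⟫_ℝ ≤ 0) (hx : x ≠ 0) :
    ‖y‖ < ‖x - y‖ := by
  have : 0 < ‖x‖ := norm_pos_iff.2 hx
  refine lt_of_pow_lt_pow_left₀ 2 (norm_nonneg _) ?_
  rw [norm_sub_sq_real]
  nlinarith

end InnerProductSpace

lemma dist_le_dist_of_mem_segment {E : Type*} [NormedAddCommGroup E] [NormedSpace ℝ E]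
    {a b c e p : E} (hac : p ∈ segment ℝ a c) (hbe : p ∈ segment ℝ b e)
    (h : dist a c ≤ dist a e) : dist b c ≤ dist b e := by
  have h₁ := dist_add_dist_of_mem_segment hac
  have h₂ := dist_add_dist_of_mem_segment hbe
  linarith [dist_triangle b p c, dist_triangle a p e]

/-- Twice the signed area of the triangle `a b c`, positive when `a b c` is counterclockwise. -/
noncomputable def orient (a b c : P²) : ℝ := wedge (b - a) (c - a)

lemma orient_eq (a b c : P²) :
    orient a b c = (b 0 - a 0) * (c 1 - a 1) - (b 1 - a 1) * (c 0 - a 0) := rfl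

lemma wedge_sub_sub (a b c : P²) : wedge (b - a) (c - b) = orient a b c := by
  simp only [wedge, orient_eq, PiLp.sub_apply]
  ring

lemma orient_rotate (a b c : P²) : orient b c a = orient a b c := by
  simp only [orient_eq]
  ring

lemma orient_swap (a b c : P²) : orient a c b = -orient a b c := by
  simp only [orient_eq]
  ring

@[simp] lemma orient_self_right (a b : P²) : orient a b b = 0 := by
  simp only [orient_eq]
  ring

@[simp] lemma orient_self_outer (a b : P²) : orient a b a = 0 := by
  simp only [orient_eq]
  ring

lemma orient_add_smul_sub (x y z u w : P²) (t : ℝ) :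
    orient x y (z + t • (w - u)) = orient x y z + t * (orient x y w - orient x y u) := by
  simp only [orient_eq, PiLp.add_apply, PiLp.smul_apply, PiLp.sub_apply, smul_eq_mul]
  ring

lemma orient_add_orient_add_orient (a b c p : P²) :
    orient p b c + orient a p c + orient a b p = orient a b c := by
  simp only [orient_eq]
  ring

lemma orient_smul_eq (a b c p : P²) :
    orient a b c • p = orient p b c • a + orient a p c • b + orient a b p • c := by
  ext i
  fin_cases i <;> simp [orient_eq] <;> ring

lemma sub_eq_smul_add_smul {a b c : P²} (h : orient a b c ≠ 0) (p : P²) :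
    p - a = (orient a p c / orient a b c) • (b - a) + (orient a b p / orient a b c) • (c - a) := by
  rw [div_eq_inv_mul, div_eq_inv_mul, mul_smul, mul_smul, ← smul_add, eq_inv_smul_iff₀ h]
  ext i
  fin_cases i <;> simp [orient_eq] <;> ring

lemma convex_setOf_orient_nonneg (x y : P²) : Convex ℝ {w | 0 ≤ orient x y w} := by
  intro v hv w hw α β hα hβ hαβ
  have : orient x y (α • v + β • w) = α * orient x y v + β * orient x y w := by
    simp only [orient_eq, PiLp.add_apply, PiLp.smul_apply, smul_eq_mul]
    linear_combination ((y 0 - x 0) * x 1 - (y 1 - x 1) * x 0) * hαβ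
  change 0 ≤ orient x y v at hv
  change 0 ≤ orient x y w at hw
  change 0 ≤ orient x y (α • v + β • w)
  rw [this]
  positivity

lemma mem_convexHull_of_orient_nonneg {a b c p : P²} (h : 0 < orient a b c)
    (ha : 0 ≤ orient b c p) (hb : 0 ≤ orient c a p) (hc : 0 ≤ orient a b p) :
    p ∈ convexHull ℝ {a, b, c} := by
  rw [orient_rotate] at ha
  rw [orient_rotate, orient_rotate] at hb
  have key := (univ : Finset (Fin 3)).centerMass_mem_convexHull (R := ℝ)
    (w := ![orient p b c, orient a p c, orient a b p]) (z := ![a, b, c]) (s := {a, b, c})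
    (by intro i _; fin_cases i <;> simpa)
    (by simpa [Fin.sum_univ_three, orient_add_orient_add_orient])
    (by intro i _; fin_cases i <;> simp)
  convert key using 1
  simp only [Finset.centerMass, Fin.sum_univ_three, Matrix.cons_val_zero, Matrix.cons_val_one,
    Matrix.cons_val_two, Matrix.head_cons, Matrix.tail_cons, orient_add_orient_add_orient,
    ← orient_smul_eq, smul_smul, inv_mul_cancel₀ h.ne', one_smul]

lemma mem_segment_of_orient {a c d p : P²} (h : 0 < orient a c d) (hp : orient a c p = 0)
    (hc : 0 ≤ orient c d p) (hd : 0 ≤ orient d a p) : p ∈ segment ℝ a c := by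
  rw [orient_rotate] at hc
  rw [orient_rotate, orient_rotate] at hd
  have key := orient_smul_eq a c d p
  rw [hp, zero_smul, add_zero] at key
  refine ⟨orient p c d / orient a c d, orient a p d / orient a c d, div_nonneg hc h.le,
    div_nonneg hd h.le, ?_, ?_⟩
  · rw [← add_div, div_eq_one_iff_eq h.ne', ← orient_add_orient_add_orient a c d p, hp, add_zero]
  · rw [div_eq_inv_mul, div_eq_inv_mul, mul_smul, mul_smul, ← smul_add, ← key, smul_smul,
      inv_mul_cancel₀ h.ne', one_smul]

lemma orient_pos_of_mem_interior {s : Set P²} {x y u z : P²} (hs : ∀ w ∈ s, 0 ≤ orient x y w)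
    (hu : 0 < orient x y u) (hz : z ∈ interior (convexHull ℝ s)) : 0 < orient x y z := by
  have hhull : convexHull ℝ s ⊆ {w | 0 ≤ orient x y w} :=
    convexHull_min hs (convex_setOf_orient_nonneg x y)
  have hev : ∀ᶠ t in 𝓝[<] (0 : ℝ), z + t • (u - x) ∈ convexHull ℝ s := by
    have hcont : Continuous fun t : ℝ ↦ z + t • (u - x) := by fun_prop
    have : Tendsto (fun t : ℝ ↦ z + t • (u - x)) (𝓝 0) (𝓝 z) := by
      simpa using hcont.tendsto 0
    exact (this.mono_left nhdsWithin_le_nhds).eventually (mem_interior_iff_mem_nhds.1 hz)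
  obtain ⟨t, hts, ht⟩ := (hev.and self_mem_nhdsWithin).exists
  have : 0 ≤ orient x y (z + t • (u - x)) := hhull hts
  rw [orient_add_smul_sub, orient_self_outer, sub_zero] at this
  nlinarith [mul_neg_of_neg_of_pos (Set.mem_Iio.1 ht) hu]

def reflect (x : P²) : P² := !₂[x 0, -x 1]

@[simp] lemma reflect_apply_zero (x : P²) : reflect x 0 = x 0 := by simp [reflect]
@[simp] lemma reflect_apply_one (x : P²) : reflect x 1 = -x 1 := by simp [reflect]

lemma orient_reflect (a b c : P²) : orient (reflect a) (reflect b) (reflect c) = -orient a b c := by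
  simp only [orient_eq, reflect_apply_zero, reflect_apply_one]
  ring

lemma dist_reflect (a b : P²) : dist (reflect a) (reflect b) = dist a b := by
  simp only [EuclideanSpace.dist_eq, Fin.sum_univ_two, reflect_apply_zero, reflect_apply_one,
    dist_neg_neg]

def IsCCWQuad (a b c d : P²) : Prop :=
  0 < orient a b c ∧ 0 < orient b c d ∧ 0 < orient c d a ∧ 0 < orient d a b

def IsInsideQuad (a b c d e : P²) : Prop :=
  0 < orient a b e ∧ 0 < orient b c e ∧ 0 < orient c d e ∧ 0 < orient d a e

lemma IsCCWQuad.rotate {a b c d : P²} (h : IsCCWQuad a b c d) : IsCCWQuad b c d a :=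
  ⟨h.2.1, h.2.2.1, h.2.2.2, h.1⟩

lemma IsCCWQuad.reflect {a b c d : P²} (h : IsCCWQuad a b c d) :
    IsCCWQuad (reflect a) (reflect d) (reflect c) (reflect b) := by
  simp only [IsCCWQuad, orient_eq, reflect_apply_zero, reflect_apply_one] at h ⊢
  obtain ⟨h₁, h₂, h₃, h₄⟩ := h
  exact ⟨by linarith, by linarith, by linarith, by linarith⟩

lemma IsInsideQuad.reflect {a b c d e : P²} (h : IsInsideQuad a b c d e) :
    IsInsideQuad (reflect a) (reflect d) (reflect c) (reflect b) (reflect e) := by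
  simp only [IsInsideQuad, orient_eq, reflect_apply_zero, reflect_apply_one] at h ⊢
  obtain ⟨h₁, h₂, h₃, h₄⟩ := h
  exact ⟨by linarith, by linarith, by linarith, by linarith⟩

/-- The segment `b e` crosses the diagonal `a c`, at a point `p`; then
`|b c| ≤ |b p| + |p c| ≤ |b p| + |p e| = |b e|`. -/
lemma IsCCWQuad.dist_le_dist {a b c d e : P²} (hq : IsCCWQuad a b c d) (hcde : 0 < orient c d e)
    (hdae : 0 < orient d a e) (hace : 0 ≤ orient a c e) (h : dist a c ≤ dist a e) :
    dist b c ≤ dist b e := by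
  obtain ⟨habc, hbcd, hcda, hdab⟩ := hq
  have hacb : orient a c b < 0 := by rw [orient_swap]; linarith
  set σ := orient a c b / (orient a c b - orient a c e) with hσ
  have hden : orient a c b - orient a c e < 0 := by linarith
  have hp_be : b + σ • (e - b) ∈ segment ℝ b e := by
    rw [segment_eq_image']
    exact ⟨σ, ⟨div_nonneg_of_nonpos hacb.le hden.le, (div_le_one_of_neg hden).2 (by linarith)⟩, rfl⟩
  have hp_ac : b + σ • (e - b) ∈ segment ℝ a c := by
    refine mem_segment_of_orient (d := d) (by rwa [← orient_rotate]) ?_ ?_ ?_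
    · rw [orient_add_smul_sub, hσ, div_mul_eq_mul_div, add_div' _ _ _ hden.ne, div_eq_zero_iff]
      left
      ring
    · refine (convex_setOf_orient_nonneg c d).segment_subset ?_ hcde.le hp_be
      change 0 ≤ orient c d b
      rw [orient_rotate]
      exact hbcd.le
    · exact (convex_setOf_orient_nonneg d a).segment_subset hdab.le hdae.le hp_be
  exact dist_le_dist_of_mem_segment hp_ac hp_be h

/-- Writing `a - c = x (b - c) + y (d - c)`, convexity at `c` gives `x, y > 0` and convexity at `a`
gives `x + y > 1`. -/
lemma IsCCWQuad.inner_nonpos {a b c d : P²} (hq : IsCCWQuad a b c d) (hb : dist a c ≤ dist a b)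
    (hd : dist a c ≤ dist a d) : ⟪b - c, d - c⟫_ℝ ≤ 0 := by
  obtain ⟨habc, hbcd, hcda, hdab⟩ := hq
  have hΔ : orient c b d < 0 := by rw [orient_swap, orient_rotate]; linarith
  have hcad : orient c a d < 0 := by rw [orient_swap]; linarith
  have hcba : orient c b a < 0 := by rw [orient_swap, ← orient_rotate]; linarith
  have habd : 0 < orient a b d := by rwa [orient_rotate]
  refine inner_nonpos_of_norm_le (sub_eq_smul_add_smul hΔ.ne a) (div_pos_of_neg_of_neg hcad hΔ)
    (div_pos_of_neg_of_neg hcba hΔ) ?_ ?_ ?_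
  · rw [← add_div, one_le_div_of_neg hΔ, ← orient_add_orient_add_orient c b d a]
    linarith
  · rw [sub_sub_sub_cancel_right, ← dist_eq_norm, ← dist_eq_norm]
    exact hb
  · rw [sub_sub_sub_cancel_right, ← dist_eq_norm, ← dist_eq_norm]
    exact hd

lemma wedge_sum_smul {ι : Type*} (v : P²) (s : Finset ι) (c : ι → ℝ) (x : ι → P²) :
    wedge v (∑ k ∈ s, c k • x k) = ∑ k ∈ s, c k * wedge v (x k) := by
  simp only [wedge, WithLp.ofLp_sum, Finset.sum_apply, PiLp.smul_apply, smul_eq_mul, mul_sum,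
    ← sum_sub_distrib]
  refine sum_congr rfl fun k _ ↦ ?_
  ring

def IsCentralConfig {ι E : Type*} [Fintype ι] [DecidableEq ι] [NormedAddCommGroup E]
    [Module ℝ E] (m : ι → ℝ) (q : ι → E) (lam : ℝ) : Prop :=
  ∀ i, -(lam • q i) = ∑ j ∈ univ.erase i, (m j / dist (q i) (q j) ^ 3) • (q j - q i)

namespace IsCentralConfig

variable {ι E : Type*} [Fintype ι] [DecidableEq ι] [NormedAddCommGroup E] [Module ℝ E]
  {m : ι → ℝ} {q : ι → E} {lam : ℝ}

lemma eq_sum (h : IsCentralConfig m q lam) (i : ι) :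
    -(lam • q i) = ∑ j, (m j / dist (q i) (q j) ^ 3) • (q j - q i) := by
  rw [h i, sum_erase]
  simp

lemma comp_equiv {κ : Type*} [Fintype κ] [DecidableEq κ] (h : IsCentralConfig m q lam)
    (σ : κ ≃ ι) : IsCentralConfig (m ∘ σ) (q ∘ σ) lam := by
  intro i
  rw [sum_erase _ (by simp)]
  exact (h.eq_sum (σ i)).trans (σ.sum_comp _).symm

end IsCentralConfig

lemma IsCentralConfig.sum_mul_orient_eq_zero {ι : Type*} [Fintype ι] [DecidableEq ι]
    {m : ι → ℝ} {q : ι → P²} {lam : ℝ} (h : IsCentralConfig m q lam) (i j : ι) :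
    ∑ k, m k * (1 / dist (q i) (q k) ^ 3 - 1 / dist (q j) (q k) ^ 3) * orient (q i) (q j) (q k)
      = 0 := by
  have key (l : ι) : ∑ k, m k / dist (q l) (q k) ^ 3 * wedge (q j - q i) (q k - q l)
      = -lam * wedge (q j - q i) (q l) := by
    rw [← wedge_sum_smul, ← h.eq_sum l]
    simp only [wedge, PiLp.neg_apply, PiLp.smul_apply, smul_eq_mul]
    ring
  calc _ = ∑ k, m k / dist (q i) (q k) ^ 3 * wedge (q j - q i) (q k - q i)
        - ∑ k, m k / dist (q j) (q k) ^ 3 * wedge (q j - q i) (q k - q j) := by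
        rw [← sum_sub_distrib]
        refine sum_congr rfl fun k _ ↦ ?_
        simp only [orient_eq, wedge, PiLp.sub_apply]
        ring
    _ = 0 := by
        rw [key, key]
        simp only [wedge, PiLp.sub_apply]
        ring

lemma mul_sub_one_div_cube_mul_nonneg {m r s w : ℝ} (hm : 0 ≤ m) (hr : 0 < r) (hrs : r ≤ s)
    (hw : 0 ≤ w) : 0 ≤ m * (1 / r ^ 3 - 1 / s ^ 3) * w := by
  have : 1 / s ^ 3 ≤ 1 / r ^ 3 := by gcongr
  exact mul_nonneg (mul_nonneg hm (sub_nonneg.2 this)) hw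

lemma mul_sub_one_div_cube_mul_pos {m r s w : ℝ} (hm : 0 < m) (hr : 0 < r) (hrs : r < s)
    (hw : 0 < w) : 0 < m * (1 / r ^ 3 - 1 / s ^ 3) * w := by
  have : 1 / s ^ 3 < 1 / r ^ 3 := by gcongr
  exact mul_pos (mul_pos hm (sub_pos.2 this)) hw

lemma dist_interior_lt_diag_of_orient_nonneg {a b c d e : P²} {mA mB mD : ℝ} (hmA : 0 ≤ mA)
    (hmB : 0 ≤ mB) (hmD : 0 < mD) (hq : IsCCWQuad a b c d) (hin : IsInsideQuad a b c d e)
    (hace : 0 ≤ orient a c e)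
    (hce : mA * (1 / dist c a ^ 3 - 1 / dist e a ^ 3) * orient c e a
      + mB * (1 / dist c b ^ 3 - 1 / dist e b ^ 3) * orient c e b
      + mD * (1 / dist c d ^ 3 - 1 / dist e d ^ 3) * orient c e d = 0) :
    dist a e < dist a c := by
  obtain ⟨-, hbce, hcde, hdae⟩ := hin
  by_contra! h
  have hca : c ≠ a := by rintro rfl; simpa using hq.1
  have hcb : c ≠ b := by rintro rfl; simpa using hq.1
  have hec : e ≠ c := by rintro rfl; simp at hcde
  have hed : e ≠ d := by rintro rfl; simp at hcde
  have hd : dist d e < dist d c := by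
    refine dist_lt_dist_of_mem_convexHull ?_ hec h
    exact mem_convexHull_of_orient_nonneg (by rw [← orient_rotate]; exact hq.2.2.1) hcde.le
      hdae.le hace
  have hb : dist b c ≤ dist b e := hq.dist_le_dist hcde hdae hace h
  have tA := mul_sub_one_div_cube_mul_nonneg hmA (dist_pos.2 hca)
    (by rwa [dist_comm c a, dist_comm e a] : dist c a ≤ dist e a)
    (by rwa [orient_rotate] : 0 ≤ orient c e a)
  have tB := mul_sub_one_div_cube_mul_nonneg hmB (dist_pos.2 hcb)
    (by rwa [dist_comm c b, dist_comm e b] : dist c b ≤ dist e b)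
    (by rw [orient_rotate]; exact hbce.le : 0 ≤ orient c e b)
  have tD := mul_sub_one_div_cube_mul_pos hmD (dist_pos.2 hed)
    (by rwa [dist_comm e d, dist_comm c d] : dist e d < dist c d) hcde
  rw [orient_swap c d e] at hce
  linarith

lemma dist_interior_lt_diag {a b c d e : P²} {mA mB mD : ℝ} (hmA : 0 ≤ mA) (hmB : 0 < mB)
    (hmD : 0 < mD) (hq : IsCCWQuad a b c d) (hin : IsInsideQuad a b c d e)
    (hce : mA * (1 / dist c a ^ 3 - 1 / dist e a ^ 3) * orient c e a
      + mB * (1 / dist c b ^ 3 - 1 / dist e b ^ 3) * orient c e b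
      + mD * (1 / dist c d ^ 3 - 1 / dist e d ^ 3) * orient c e d = 0) :
    dist a e < dist a c := by
  wlog hace : 0 ≤ orient a c e generalizing a b c d e mB mD
  · have := this hmD hmB hq.reflect hin.reflect ?_ (by rw [orient_reflect]; linarith)
    · simpa only [dist_reflect] using this
    · simp only [dist_reflect, orient_reflect]
      linear_combination -hce
  exact dist_interior_lt_diag_of_orient_nonneg hmA hmB.le hmD hq hin hace hce

lemma dist_side_lt_diag {a b c d e : P²} {mA mB mD mE : ℝ} (hmA : 0 ≤ mA) (hmB : 0 < mB)
    (hmD : 0 < mD) (hmE : 0 ≤ mE) (hq : IsCCWQuad a b c d) (hin : IsInsideQuad a b c d e)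
    (he : e ∈ convexHull ℝ {a, b, c, d})
    (hbc : mA * (1 / dist b a ^ 3 - 1 / dist c a ^ 3) * orient b c a
      + mD * (1 / dist b d ^ 3 - 1 / dist c d ^ 3) * orient b c d
      + mE * (1 / dist b e ^ 3 - 1 / dist c e ^ 3) * orient b c e = 0)
    (hcd : mA * (1 / dist c a ^ 3 - 1 / dist d a ^ 3) * orient c d a
      + mB * (1 / dist c b ^ 3 - 1 / dist d b ^ 3) * orient c d b
      + mE * (1 / dist c e ^ 3 - 1 / dist d e ^ 3) * orient c d e = 0) :
    dist a b < dist a c ∨ dist a d < dist a c := by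
  obtain ⟨-, hbce, hcde, -⟩ := hin
  by_contra! ⟨hb, hd⟩
  have hobtuse := hq.inner_nonpos hb hd
  have hca : c ≠ a := by rintro rfl; simpa using hq.1
  have hcb : c ≠ b := by rintro rfl; simpa using hq.1
  have hcd' : c ≠ d := by rintro rfl; simpa using hq.2.1
  have hce : c ≠ e := by rintro rfl; simp at hcde
  have hbd : dist c d < dist b d := by
    rw [dist_eq_norm, dist_eq_norm, norm_sub_rev, ← sub_sub_sub_cancel_right b d c]
    exact norm_lt_norm_sub_of_inner_nonpos hobtuse (sub_ne_zero.2 hcb.symm)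
  have hdb : dist c b < dist d b := by
    rw [dist_eq_norm, dist_eq_norm, norm_sub_rev, ← sub_sub_sub_cancel_right d b c]
    exact norm_lt_norm_sub_of_inner_nonpos (by rwa [real_inner_comm]) (sub_ne_zero.2 hcd'.symm)
  rcases dist_le_or_dist_le_of_mem_convexHull he hobtuse hb hd with hec | hec
  · have tA := mul_sub_one_div_cube_mul_nonneg hmA (dist_pos.2 hca)
      (by rwa [dist_comm c a, dist_comm b a] : dist c a ≤ dist b a)
      (by rw [orient_rotate]; exact hq.1.le : 0 ≤ orient b c a)
    have tD := mul_sub_one_div_cube_mul_pos hmD (dist_pos.2 hcd') hbd hq.2.1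
    have tE := mul_sub_one_div_cube_mul_nonneg hmE (dist_pos.2 hce)
      (by rwa [dist_comm c e, dist_comm b e] : dist c e ≤ dist b e) hbce.le
    linarith
  · have tA := mul_sub_one_div_cube_mul_nonneg hmA (dist_pos.2 hca)
      (by rwa [dist_comm c a, dist_comm d a] : dist c a ≤ dist d a) hq.2.2.1.le
    have tB := mul_sub_one_div_cube_mul_pos hmB (dist_pos.2 hcb) hdb
      (by rw [orient_rotate]; exact hq.2.1 : 0 < orient c d b)
    have tE := mul_sub_one_div_cube_mul_nonneg hmE (dist_pos.2 hce)
      (by rwa [dist_comm c e, dist_comm d e] : dist c e ≤ dist d e) hcde.le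
    linarith

def quadRotation : Equiv.Perm (Fin 5) :=
  ⟨![1, 2, 3, 0, 4], ![3, 0, 1, 2, 4], by decide, by decide⟩

structure IsQuadCentralConfig (m : Fin 5 → ℝ) (q : Fin 5 → P²) (lam : ℝ) : Prop where
  mass_pos : ∀ i, 0 < m i
  central : IsCentralConfig m q lam
  quad : IsCCWQuad (q 0) (q 1) (q 2) (q 3)
  mem_interior : q 4 ∈ interior (convexHull ℝ {q 0, q 1, q 2, q 3})

namespace IsQuadCentralConfig

variable {m : Fin 5 → ℝ} {q : Fin 5 → P²} {lam : ℝ}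

lemma rotate (h : IsQuadCentralConfig m q lam) :
    IsQuadCentralConfig (m ∘ quadRotation) (q ∘ quadRotation) lam where
  mass_pos i := h.mass_pos _
  central := h.central.comp_equiv quadRotation
  quad := h.quad.rotate
  mem_interior := by
    change q 4 ∈ interior (convexHull ℝ {q 1, q 2, q 3, q 0})
    convert h.mem_interior using 3
    ext
    simp only [Set.mem_insert_iff, Set.mem_singleton_iff]
    tauto

lemma orient_pos (h : IsQuadCentralConfig m q lam) : 0 < orient (q 0) (q 1) (q 4) := by
  refine orient_pos_of_mem_interior ?_ h.quad.1 h.mem_interior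
  simp only [Set.mem_insert_iff, Set.mem_singleton_iff]
  rintro w (rfl | rfl | rfl | rfl)
  · simp
  · simp
  · exact h.quad.1.le
  · rw [orient_rotate]
    exact h.quad.2.2.2.le

lemma isInsideQuad (h : IsQuadCentralConfig m q lam) :
    IsInsideQuad (q 0) (q 1) (q 2) (q 3) (q 4) :=
  ⟨h.orient_pos, h.rotate.orient_pos, h.rotate.rotate.orient_pos,
    h.rotate.rotate.rotate.orient_pos⟩

lemma diag_gt (h : IsQuadCentralConfig m q lam) :
    dist (q 0) (q 2) > dist (q 0) (q 4) ∧
      (dist (q 0) (q 2) > dist (q 0) (q 1) ∨ dist (q 0) (q 2) > dist (q 0) (q 3)) := by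
  have h24 := h.central.sum_mul_orient_eq_zero 2 4
  have h12 := h.central.sum_mul_orient_eq_zero 1 2
  have h23 := h.central.sum_mul_orient_eq_zero 2 3
  simp only [Fin.sum_univ_five, orient_self_right, orient_self_outer, mul_zero, add_zero]
    at h24 h12 h23
  have hm := h.mass_pos
  exact ⟨dist_interior_lt_diag (hm 0).le (hm 1) (hm 3) h.quad h.isInsideQuad h24,
    dist_side_lt_diag (hm 0).le (hm 1) (hm 3) (hm 4).le h.quad h.isInsideQuad
      (interior_subset h.mem_interior) h12 h23⟩

end IsQuadCentralConfig

end FiveBody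

open FiveBody

theorem stmt16_general (q : Fin 5 → EuclideanSpace ℝ (Fin 2)) (m : Fin 5 → ℝ)
    (lam : ℝ) (hm : ∀ i, 0 < m i)
    (hcc : ∀ i, -(lam • q i)
      = ∑ j ∈ Finset.univ.erase i, (m j / dist (q i) (q j) ^ 3) • (q j - q i))
    (hc1 : 0 < wedge (q 1 - q 0) (q 2 - q 1))
    (hc2 : 0 < wedge (q 2 - q 1) (q 3 - q 2))
    (hc3 : 0 < wedge (q 3 - q 2) (q 0 - q 3))
    (hc4 : 0 < wedge (q 0 - q 3) (q 1 - q 0))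
    (h5 : q 4 ∈ interior (convexHull ℝ {q 0, q 1, q 2, q 3})) :
    (dist (q 0) (q 2) > dist (q 0) (q 4) ∧
      (dist (q 0) (q 2) > dist (q 0) (q 1) ∨ dist (q 0) (q 2) > dist (q 0) (q 3))) ∧
    (dist (q 1) (q 3) > dist (q 1) (q 4) ∧
      (dist (q 1) (q 3) > dist (q 1) (q 2) ∨ dist (q 1) (q 3) > dist (q 1) (q 0))) ∧
    (dist (q 2) (q 0) > dist (q 2) (q 4) ∧
      (dist (q 2) (q 0) > dist (q 2) (q 3) ∨ dist (q 2) (q 0) > dist (q 2) (q 1))) ∧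
    (dist (q 3) (q 1) > dist (q 3) (q 4) ∧
      (dist (q 3) (q 1) > dist (q 3) (q 0) ∨ dist (q 3) (q 1) > dist (q 3) (q 2))) := by
  rw [wedge_sub_sub] at hc1 hc2 hc3 hc4
  have h : IsQuadCentralConfig m q lam := ⟨hm, hcc, ⟨hc1, hc2, hc3, hc4⟩, h5⟩
  exact ⟨h.diag_gt, h.rotate.diag_gt, h.rotate.rotate.diag_gt,
    h.rotate.rotate.rotate.diag_gt⟩

/-- For a 5-body planar central configuration whose convex hull is the strictly
convex quadrilateral `q 0 q 1 q 2 q 3` (counterclockwise) with `q 4` interior: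
each diagonal beats the distance to the interior point (`r₁₃ > r₁₅`) and beats at
least one of the adjacent sides (`r₁₃ > r₁₂` or `r₁₃ > r₁₄`), together with the
statements obtained by cyclic permutation of the four vertices. -/
theorem stmt16 (q : Fin 5 → EuclideanSpace ℝ (Fin 2)) (m : Fin 5 → ℝ)
    (lam : ℝ) (hm : ∀ i, 0 < m i) (hq : ∀ i j, i ≠ j → q i ≠ q j)
    (hcom : ∑ i, m i • q i = 0)
    (hcc : ∀ i, -(lam • q i)
      = ∑ j ∈ Finset.univ.erase i, (m j / dist (q i) (q j) ^ 3) • (q j - q i))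
    (hc1 : 0 < wedge (q 1 - q 0) (q 2 - q 1))
    (hc2 : 0 < wedge (q 2 - q 1) (q 3 - q 2))
    (hc3 : 0 < wedge (q 3 - q 2) (q 0 - q 3))
    (hc4 : 0 < wedge (q 0 - q 3) (q 1 - q 0))
    (h5 : q 4 ∈ interior (convexHull ℝ {q 0, q 1, q 2, q 3})) :
    (dist (q 0) (q 2) > dist (q 0) (q 4) ∧
      (dist (q 0) (q 2) > dist (q 0) (q 1) ∨ dist (q 0) (q 2) > dist (q 0) (q 3))) ∧
    (dist (q 1) (q 3) > dist (q 1) (q 4) ∧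
      (dist (q 1) (q 3) > dist (q 1) (q 2) ∨ dist (q 1) (q 3) > dist (q 1) (q 0))) ∧
    (dist (q 2) (q 0) > dist (q 2) (q 4) ∧
      (dist (q 2) (q 0) > dist (q 2) (q 3) ∨ dist (q 2) (q 0) > dist (q 2) (q 1))) ∧
    (dist (q 3) (q 1) > dist (q 3) (q 4) ∧
      (dist (q 3) (q 1) > dist (q 3) (q 0) ∨ dist (q 3) (q 1) > dist (q 3) (q 2))) :=
  stmt16_general q m lam hm hcc hc1 hc2 hc3 hc4 h5
end
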